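/- arXiv:math/0605413 — 5 statements merged into one kernel-verified Lean document; each statement's English description precedes it below -/
import Mathlib

section
/- Let X be a locally compact Hausdorff space. Let (f_i)_{i} be a net in C_b(X) (indexed by a directed set / filter) which is uniformly bounded, i.e. there is C ≥ 0 with ‖f_i‖_∞ ≤ C for all i, and let f ∈ C_b(X). Then f_i converges to f uniformly on every compact subset of X if and only if for every φ ∈ C₀(X) the products satisfy ‖(f_i − f)·φ‖_∞ → 0. (In other words, on bounded subsets of C_b(X) the strict topology induced by C₀(X) coincides with the topology of compact convergence.) -/
open scoped ZeroAtInfty BoundedContinuousFunction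
open Filter

/-- On bounded subsets of `C_b(X)` for a locally compact Hausdorff space `X`, the strict
topology (induced by the seminorms `f ↦ ‖f·φ‖` for `φ ∈ C₀(X)`) coincides with the topology
of uniform convergence on compact sets: a uniformly bounded net `f i` converges to `f`
uniformly on every compact set iff `‖(f i - f)·φ‖ → 0` for every `φ ∈ C₀(X)`. -/
theorem stmt0 {X : Type*} [TopologicalSpace X] [LocallyCompactSpace X] [T2Space X]
    {ι : Type*} (l : Filter ι) (f : ι → (X →ᵇ ℂ)) (g : X →ᵇ ℂ)
    (C : ℝ) (hC : 0 ≤ C) (hbound : ∀ i, ‖f i‖ ≤ C) :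
    (∀ K : Set X, IsCompact K → TendstoUniformlyOn (fun i x => f i x) (fun x => g x) l K) ↔
      (∀ φ : C₀(X, ℂ),
        Tendsto (fun i => ‖(f i - g) * φ.toBCF‖) l (nhds 0)) := by
  constructor
  · intro h φ
    set M : ℝ := C + ‖g‖ with hM
    have hM0 : 0 ≤ M := add_nonneg hC (norm_nonneg _)
    have hfg : ∀ i x, ‖f i x - g x‖ ≤ M := by
      intro i x
      calc ‖f i x - g x‖ ≤ ‖f i x‖ + ‖g x‖ := norm_sub_le _ _
        _ ≤ C + ‖g‖ := add_le_add
            ((BoundedContinuousFunction.norm_coe_le_norm _ x).trans (hbound i))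
            (BoundedContinuousFunction.norm_coe_le_norm _ x)
    rw [Metric.tendsto_nhds]
    intro ε hε
    -- compact set outside which φ is small
    have hsmall : {x : X | ‖φ x‖ < ε / (2 * (M + 1))} ∈ Filter.cocompact X := by
      have := zero_at_infty (F := C₀(X, ℂ)) φ
      have h2 : (0:ℝ) < ε / (2 * (M + 1)) := by positivity
      have := this (Metric.ball_mem_nhds 0 h2)
      filter_upwards [this] with x hx
      simpa [dist_eq_norm] using hx
    rw [Filter.mem_cocompact] at hsmall
    obtain ⟨K, hK, hKsub⟩ := hsmall
    have hεφ : (0:ℝ) < ε / (2 * (‖φ.toBCF‖ + 1)) := by positivity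
    have hUK := (h K hK)
    rw [Metric.tendstoUniformlyOn_iff] at hUK
    filter_upwards [hUK _ hεφ] with i hi
    have key : ‖(f i - g) * φ.toBCF‖ ≤ ε / 2 := by
      apply BoundedContinuousFunction.norm_le (by positivity) |>.mpr
      intro x
      simp only [BoundedContinuousFunction.coe_mul, BoundedContinuousFunction.coe_sub,
        Pi.mul_apply, Pi.sub_apply]
      rw [norm_mul]
      by_cases hx : x ∈ K
      · have h1 : ‖f i x - g x‖ ≤ ε / (2 * (‖φ.toBCF‖ + 1)) := by
          have := hi x hx
          rw [dist_eq_norm] at this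
          have : ‖g x - f i x‖ ≤ _ := this.le
          simpa [norm_sub_rev] using this
        have h2 : ‖φ.toBCF x‖ ≤ ‖φ.toBCF‖ := BoundedContinuousFunction.norm_coe_le_norm _ x
        calc ‖f i x - g x‖ * ‖φ.toBCF x‖
            ≤ (ε / (2 * (‖φ.toBCF‖ + 1))) * ‖φ.toBCF‖ :=
              mul_le_mul h1 h2 (norm_nonneg _) (by positivity)
          _ ≤ ε / 2 := by
              rw [div_mul_eq_mul_div, div_le_div_iff₀ (by positivity) (by norm_num)]
              ring_nf
              nlinarith [norm_nonneg (φ.toBCF), hε.le]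
      · have h1 : ‖φ.toBCF x‖ < ε / (2 * (M + 1)) := hKsub (Set.mem_compl hx)
        calc ‖f i x - g x‖ * ‖φ.toBCF x‖
            ≤ M * (ε / (2 * (M + 1))) :=
              mul_le_mul (hfg i x) h1.le (norm_nonneg _) hM0
          _ ≤ ε / 2 := by
              rw [mul_comm, div_mul_eq_mul_div, div_le_div_iff₀ (by positivity) two_pos]
              nlinarith
    rw [Real.dist_eq, sub_zero, abs_of_nonneg (norm_nonneg _)]
    exact lt_of_le_of_lt key (by linarith)
  · intro h K hK
    obtain ⟨φ, hφ1, -, hφc, hφmem⟩ :=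
      exists_continuous_one_zero_of_isCompact hK isClosed_empty (Set.disjoint_empty K)
    -- complexified version in C₀
    let ψ : C₀(X, ℂ) :=
      { toFun := fun x => (φ x : ℂ)
        continuous_toFun := Complex.continuous_ofReal.comp φ.continuous
        zero_at_infty' := by
          have : (fun x => (φ x : ℂ)) =ᶠ[Filter.cocompact X] 0 := by
            rw [Filter.eventuallyEq_iff_exists_mem]
            refine ⟨(tsupport φ)ᶜ, ?_, fun x hx => ?_⟩
            · rw [Filter.mem_cocompact]
              exact ⟨tsupport φ, hφc, le_refl _⟩
            · simp [image_eq_zero_of_notMem_tsupport hx]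
          exact Filter.Tendsto.congr' this.symm tendsto_const_nhds }
    have hψ := h ψ
    rw [Metric.tendstoUniformlyOn_iff]
    intro ε hε
    rw [Metric.tendsto_nhds] at hψ
    filter_upwards [hψ ε hε] with i hi x hx
    rw [Real.dist_eq, sub_zero, abs_of_nonneg (norm_nonneg _)] at hi
    have h1 : ‖((f i - g) * ψ.toBCF) x‖ ≤ ‖(f i - g) * ψ.toBCF‖ :=
      BoundedContinuousFunction.norm_coe_le_norm _ x
    have h2 : ((f i - g) * ψ.toBCF) x = f i x - g x := by
      simp only [BoundedContinuousFunction.coe_mul, BoundedContinuousFunction.coe_sub,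
        Pi.mul_apply, Pi.sub_apply]
      have : ψ.toBCF x = (1 : ℂ) := by
        simp only [ZeroAtInftyContinuousMap.toBCF_apply]
        have := hφ1 hx
        simp only [Pi.one_apply] at this
        simp [ψ, this]
      rw [this, mul_one]
    rw [dist_eq_norm, norm_sub_rev, ← h2]
    exact lt_of_le_of_lt h1 hi
end

section
/- Let X be a locally compact Hausdorff space and let S be a unital *-subalgebra of C_b(X). Then S separates the points of X if and only if S is strictly dense in C_b(X), i.e. if and only if for every f ∈ C_b(X), every finite set Φ ⊆ C₀(X) and every ε > 0 there exists s ∈ S such that ‖(f − s)·φ‖_∞ < ε for all φ ∈ Φ. -/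
/-!
If `S` separates points: the seminorms given by `Φ` only see a compact set `K` outside of which
every `φ ∈ Φ` is small. Stone–Weierstrass on `K` gives `s ∈ S` uniformly close to `f` on `K`,
but `s` may be huge off `K`. Composing `s` with a polynomial in `z, z̄` that approximates the
radial retraction onto a disc of radius about `‖f‖` keeps it in `S`, close to `f` on `K`, and
bounded by about `‖f‖` everywhere.

Conversely, given `x ≠ y`, approximate `f ∈ C₀(X)` with `f x = 1`, `f y = 0` against a
`φ ∈ C₀(X)` equal to `1` at `x` and `y`.
-/

open scoped ZeroAtInfty BoundedContinuousFunction
open Filter Topology Metric Set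

section RadialRetraction

variable {E : Type*} [NormedAddCommGroup E] [NormedSpace ℝ E] {R : ℝ}

noncomputable def radialRetraction (R : ℝ) (z : E) : E := (R / max R ‖z‖) • z

lemma continuous_radialRetraction (hR : 0 < R) : Continuous (radialRetraction (E := E) R) :=
  (continuous_const.div (continuous_const.max continuous_norm) fun _ =>
    (hR.trans_le (le_max_left _ _)).ne').smul continuous_id

lemma norm_radialRetraction_le (hR : 0 < R) (z : E) : ‖radialRetraction R z‖ ≤ R := by
  have hmax : 0 < max R ‖z‖ := hR.trans_le (le_max_left _ _)
  rw [radialRetraction, norm_smul, Real.norm_of_nonneg (by positivity), div_mul_eq_mul_div,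
    div_le_iff₀ hmax]
  exact mul_le_mul_of_nonneg_left (le_max_right _ _) hR.le

lemma radialRetraction_of_norm_le (hR : 0 < R) {z : E} (hz : ‖z‖ ≤ R) :
    radialRetraction R z = z := by
  rw [radialRetraction, max_eq_left hz, div_self hR.ne', one_smul]

end RadialRetraction

namespace BoundedContinuousFunction

variable {𝕜 X : Type*} [RCLike 𝕜] [TopologicalSpace X]

noncomputable def compContinuousStarAlgHom {D : Type*} [TopologicalSpace D] [CompactSpace D]
    (r : C(X, D)) : C(D, 𝕜) →⋆ₐ[𝕜] (X →ᵇ 𝕜) where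
  toFun q := (mkOfCompact q).compContinuous r
  map_one' := rfl
  map_mul' _ _ := rfl
  map_zero' := rfl
  map_add' _ _ := rfl
  commutes' _ := rfl
  map_star' _ := rfl

@[simp]
lemma compContinuousStarAlgHom_apply {D : Type*} [TopologicalSpace D] [CompactSpace D]
    (r : C(X, D)) (q : C(D, 𝕜)) (x : X) : compContinuousStarAlgHom r q x = q (r x) := rfl

lemma map_starClosure_polynomialFunctions_le {S : StarSubalgebra 𝕜 (X →ᵇ 𝕜)} {D : Set 𝕜}
    [CompactSpace D] {r : C(X, D)} (hr : compContinuousStarAlgHom r (.restrict D (.id 𝕜)) ∈ S) :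
    (polynomialFunctions D).starClosure.map (compContinuousStarAlgHom r) ≤ S := by
  rw [polynomialFunctions.starClosure_eq_adjoin_X, StarAlgHom.map_adjoin, Set.image_singleton,
    StarAlgebra.adjoin_le_iff, Set.singleton_subset_iff, Polynomial.toContinuousMapOnAlgHom_apply,
    Polynomial.toContinuousMapOn_X_eq_restrict_id]
  exact hr

lemma norm_mul_le_max {g φ : X →ᵇ 𝕜} {B δ η : ℝ} (hB : 0 ≤ B) (hδ : 0 ≤ δ)
    (hg : ∀ x, ‖g x‖ ≤ B) (hgφ : ∀ x, δ ≤ ‖φ x‖ → ‖g x‖ ≤ η) :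
    ‖g * φ‖ ≤ max (B * δ) (η * ‖φ‖) := by
  refine (norm_le (le_max_of_le_left (mul_nonneg hB hδ))).2 fun x => ?_
  rw [coe_mul, Pi.mul_apply, norm_mul]
  by_cases hx : δ ≤ ‖φ x‖
  · exact le_max_of_le_right (mul_le_mul (hgφ x hx) (norm_coe_le_norm φ x) (norm_nonneg _)
      ((norm_nonneg _).trans (hgφ x hx)))
  · exact le_max_of_le_left (mul_le_mul (hg x) (not_le.1 hx).le (norm_nonneg _) hB)

end BoundedContinuousFunction

namespace ZeroAtInftyContinuousMap

variable {X : Type*} [TopologicalSpace X]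

lemma isCompact_setOf_le_norm {E : Type*} [NormedAddCommGroup E] (φ : C₀(X, E)) {δ : ℝ}
    (hδ : 0 < δ) : IsCompact {x | δ ≤ ‖φ x‖} := by
  have hsmall : ∀ᶠ x in cocompact X, ‖φ x‖ < δ :=
    (tendsto_zero_iff_norm_tendsto_zero.1 (zero_at_infty φ)).eventually (gt_mem_nhds hδ)
  obtain ⟨K, hK, hKφ⟩ := mem_cocompact'.1 hsmall
  exact hK.of_isClosed_subset (isClosed_le continuous_const (continuous_norm.comp φ.continuous))
    fun x hx => hKφ (not_lt.2 hx : ¬ ‖φ x‖ < δ)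

lemma exists_eqOn_one_eqOn_zero {𝕜 : Type*} [RCLike 𝕜] [RegularSpace X] [LocallyCompactSpace X]
    {K F : Set X} (hK : IsCompact K) (hF : IsClosed F) (hKF : Disjoint K F) :
    ∃ φ : C₀(X, 𝕜), EqOn φ 1 K ∧ EqOn φ 0 F := by
  obtain ⟨h, h1, h0, hc, -⟩ := exists_continuous_one_zero_of_isCompact hK hF hKF
  refine ⟨⟨⟨fun x => (h x : 𝕜), by fun_prop⟩, (hc.comp_left RCLike.ofReal_zero).is_zero_at_infty⟩,
    fun x hx => ?_, fun x hx => ?_⟩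
  · simp [h1 hx]
  · simp [h0 hx]

end ZeroAtInftyContinuousMap

namespace StarSubalgebra

open BoundedContinuousFunction

variable {𝕜 X : Type*} [RCLike 𝕜] [TopologicalSpace X] (S : StarSubalgebra 𝕜 (X →ᵇ 𝕜))

theorem exists_mem_norm_lt_and_near_of_mem {s : X →ᵇ 𝕜} (hs : s ∈ S) {R η : ℝ} (hR : 0 < R)
    (hη : 0 < η) : ∃ t ∈ S, ∀ x, ‖t x‖ < R + η ∧ (‖s x‖ ≤ R → ‖t x - s x‖ < η) := by
  let D : Set 𝕜 := closedBall 0 ‖s‖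
  have : CompactSpace D := isCompact_iff_compactSpace.mp (isCompact_closedBall 0 ‖s‖)
  let r : C(X, D) := ⟨fun x => ⟨s x, by simpa [D] using s.norm_coe_le_norm x⟩, by fun_prop⟩
  let T : C(D, 𝕜) := ⟨fun z => radialRetraction R (z : 𝕜),
    (continuous_radialRetraction hR).comp continuous_subtype_val⟩
  obtain ⟨q, hq, hTq⟩ : ∃ q ∈ (polynomialFunctions D).starClosure, dist T q < η := by
    have hT : T ∈ closure ((polynomialFunctions D).starClosure : Set C(D, 𝕜)) := by
      rw [← StarSubalgebra.topologicalClosure_coe,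
        polynomialFunctions.starClosure_topologicalClosure]
      trivial
    exact Metric.mem_closure_iff.mp hT η hη
  have hr : compContinuousStarAlgHom r (.restrict D (.id 𝕜)) ∈ S := hs
  refine ⟨compContinuousStarAlgHom r q, map_starClosure_polynomialFunctions_le hr ⟨q, hq, rfl⟩,
    fun x => ?_⟩
  have hqT : ‖q (r x) - radialRetraction R (s x)‖ < η := by
    rw [← dist_eq_norm, dist_comm]
    exact (ContinuousMap.dist_apply_le_dist (r x)).trans_lt hTq
  refine ⟨?_, fun hx => ?_⟩
  · calc ‖q (r x)‖ ≤ ‖radialRetraction R (s x)‖ + ‖q (r x) - radialRetraction R (s x)‖ :=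
          norm_le_norm_add_norm_sub' _ _
      _ < R + η := add_lt_add_of_le_of_lt (norm_radialRetraction_le hR _) hqT
  · rwa [radialRetraction_of_norm_le hR hx] at hqT

variable {S}

theorem exists_mem_near_on_isCompact (hS : ∀ x y : X, x ≠ y → ∃ s ∈ S, s x ≠ s y)
    (f : X →ᵇ 𝕜) {K : Set X} (hK : IsCompact K) {η : ℝ} (hη : 0 < η) :
    ∃ s ∈ S, ∀ x ∈ K, ‖f x - s x‖ < η := by
  have := isCompact_iff_compactSpace.mp hK
  let ρ : (X →ᵇ 𝕜) →⋆ₐ[𝕜] C(K, 𝕜) :=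
    (ContinuousMap.compStarAlgHom' 𝕜 𝕜 ⟨Subtype.val, continuous_subtype_val⟩).comp
      (toContinuousMapStarₐ 𝕜)
  have hsep : (S.map ρ).SeparatesPoints := by
    intro x y hxy
    obtain ⟨s, hs, hsxy⟩ := hS x y (Subtype.coe_injective.ne hxy)
    exact ⟨_, ⟨ρ s, ⟨s, hs, rfl⟩, rfl⟩, hsxy⟩
  have hf : ρ f ∈ closure (S.map ρ : Set C(K, 𝕜)) := by
    rw [← StarSubalgebra.topologicalClosure_coe,
      ContinuousMap.starSubalgebra_topologicalClosure_eq_top_of_separatesPoints _ hsep]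
    trivial
  obtain ⟨_, ⟨s, hs, rfl⟩, hfs⟩ := Metric.mem_closure_iff.mp hf η hη
  refine ⟨s, hs, fun x hx => ?_⟩
  simpa [ρ, dist_eq_norm] using (ContinuousMap.dist_apply_le_dist ⟨x, hx⟩).trans_lt hfs

theorem exists_mem_norm_lt_and_near_on_isCompact (hS : ∀ x y : X, x ≠ y → ∃ s ∈ S, s x ≠ s y)
    (f : X →ᵇ 𝕜) {K : Set X} (hK : IsCompact K) {η : ℝ} (hη : 0 < η) :
    ∃ t ∈ S, ∀ x, ‖t x‖ < ‖f‖ + η ∧ (x ∈ K → ‖f x - t x‖ < η) := by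
  obtain ⟨s, hs, hfs⟩ := exists_mem_near_on_isCompact hS f hK (half_pos hη)
  obtain ⟨t, ht, hts⟩ := S.exists_mem_norm_lt_and_near_of_mem hs
    (add_pos_of_nonneg_of_pos (norm_nonneg f) (half_pos hη)) (half_pos hη)
  refine ⟨t, ht, fun x => ⟨by linarith [(hts x).1], fun hx => ?_⟩⟩
  have hsx : ‖s x‖ ≤ ‖f‖ + η / 2 := by
    calc ‖s x‖ ≤ ‖f x‖ + ‖s x - f x‖ := norm_le_norm_add_norm_sub' _ _
      _ ≤ ‖f‖ + η / 2 := by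
        rw [norm_sub_rev]; linarith [f.norm_coe_le_norm x, hfs x hx]
  calc ‖f x - t x‖ ≤ ‖f x - s x‖ + ‖s x - t x‖ := norm_sub_le_norm_sub_add_norm_sub _ _ _
    _ = ‖f x - s x‖ + ‖t x - s x‖ := by rw [norm_sub_rev (s x)]
    _ < η := by linarith [hfs x hx, (hts x).2 hsx]

theorem exists_mem_norm_sub_mul_lt (hS : ∀ x y : X, x ≠ y → ∃ s ∈ S, s x ≠ s y)
    (f : X →ᵇ 𝕜) (Φ : Finset C₀(X, 𝕜)) {ε : ℝ} (hε : 0 < ε) :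
    ∃ s ∈ S, ∀ φ ∈ Φ, ‖(f - s) * φ.toBCF‖ < ε := by
  obtain ⟨η, hηΦ, hη⟩ : ∃ η, (∀ φ ∈ Φ, η * ‖φ.toBCF‖ < ε) ∧ 0 < η := by
    have hsmall : ∀ᶠ η in 𝓝[>] (0 : ℝ), ∀ φ ∈ Φ, η * ‖φ.toBCF‖ < ε :=
      (eventually_all_finset Φ).2 fun φ _ => nhdsWithin_le_nhds <|
        ((continuous_id.mul continuous_const).tendsto' 0 0 (zero_mul _)).eventually
          (gt_mem_nhds hε)
    exact (hsmall.and self_mem_nhdsWithin).exists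
  set B := 2 * ‖f‖ + η
  have hB : 0 < B := by positivity
  set δ := ε / (2 * B)
  have hδ : 0 < δ := by positivity
  have hBδ : B * δ = ε / 2 := by simp only [δ]; field_simp
  have hK : IsCompact (⋃ φ ∈ Φ, {x | δ ≤ ‖φ x‖}) :=
    Φ.finite_toSet.isCompact_biUnion fun φ _ => φ.isCompact_setOf_le_norm hδ
  obtain ⟨t, ht, htf⟩ := exists_mem_norm_lt_and_near_on_isCompact hS f hK hη
  refine ⟨t, ht, fun φ hφ => ?_⟩
  have hbound : ∀ x, ‖(f - t) x‖ ≤ B := fun x =>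
    calc ‖f x - t x‖ ≤ ‖f x‖ + ‖t x‖ := norm_sub_le _ _
      _ ≤ B := by linarith [f.norm_coe_le_norm x, (htf x).1]
  have hnear : ∀ x, δ ≤ ‖φ.toBCF x‖ → ‖(f - t) x‖ ≤ η := fun x hx =>
    ((htf x).2 (mem_biUnion hφ hx)).le
  calc ‖(f - t) * φ.toBCF‖ ≤ max (B * δ) (η * ‖φ.toBCF‖) := norm_mul_le_max hB.le hδ.le hbound hnear
    _ < ε := max_lt (by linarith) (hηΦ φ hφ)

end StarSubalgebra

theorem exists_mem_ne_of_forall_exists_mem_norm_sub_mul_lt {𝕜 X : Type*} [RCLike 𝕜]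
    [TopologicalSpace X] [LocallyCompactSpace X] [T2Space X] {S : Set (X →ᵇ 𝕜)}
    (hS : ∀ f : X →ᵇ 𝕜, ∀ Φ : Finset C₀(X, 𝕜), ∀ ε : ℝ, 0 < ε →
      ∃ s ∈ S, ∀ φ ∈ Φ, ‖(f - s) * φ.toBCF‖ < ε) {x y : X} (hxy : x ≠ y) :
    ∃ s ∈ S, s x ≠ s y := by
  obtain ⟨f, hfx, hfy⟩ := ZeroAtInftyContinuousMap.exists_eqOn_one_eqOn_zero (𝕜 := 𝕜)
    isCompact_singleton isClosed_singleton (disjoint_singleton.2 hxy)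
  obtain ⟨φ, hφ, -⟩ := ZeroAtInftyContinuousMap.exists_eqOn_one_eqOn_zero (𝕜 := 𝕜)
    ((isCompact_singleton (x := x)).insert y) isClosed_empty (disjoint_empty _)
  obtain ⟨s, hs, hsφ⟩ := hS f.toBCF {φ} (1 / 2) (by norm_num)
  have hnear : ∀ z ∈ ({y, x} : Set X), ‖f z - s z‖ < 1 / 2 := fun z hz => by
    simpa [hφ hz] using (((f.toBCF - s) * φ.toBCF).norm_coe_le_norm z).trans_lt
      (hsφ φ (Finset.mem_singleton_self φ))
  refine ⟨s, hs, fun hsxy => ?_⟩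
  have hx := hnear x (by simp)
  have hy := hnear y (by simp)
  rw [hfx rfl, hsxy, Pi.one_apply] at hx
  rw [hfy rfl, Pi.zero_apply] at hy
  have : (1 : ℝ) ≤ ‖1 - s y‖ + ‖0 - s y‖ := by
    simpa using norm_sub_le (1 - s y) (0 - s y)
  linarith

/-- For a locally compact Hausdorff space `X`, a unital `*`-subalgebra `S` of `C_b(X)`
separates the points of `X` if and only if it is dense in `C_b(X)` for the strict topology,
i.e. iff every `f ∈ C_b(X)` can be approximated in finitely many of the seminorms
`f ↦ ‖f·φ‖`, `φ ∈ C₀(X)`, by elements of `S`. -/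
theorem stmt1 {X : Type*} [TopologicalSpace X] [LocallyCompactSpace X] [T2Space X]
    (S : StarSubalgebra ℂ (X →ᵇ ℂ)) :
    (∀ x y : X, x ≠ y → ∃ s ∈ S, s x ≠ s y) ↔
      (∀ f : X →ᵇ ℂ, ∀ Φ : Finset C₀(X, ℂ), ∀ ε : ℝ, 0 < ε →
        ∃ s ∈ S, ∀ φ ∈ Φ, ‖(f - s) * φ.toBCF‖ < ε) :=
  ⟨fun hS _ Φ _ hε => S.exists_mem_norm_sub_mul_lt hS _ Φ hε,
    fun hS _ _ hxy => exists_mem_ne_of_forall_exists_mem_norm_sub_mul_lt hS hxy⟩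
end

section
/- Let S be a real vector space of countably infinite dimension (i.e. admitting a basis indexed by ℕ) and let B : S × S → ℝ be a nondegenerate alternating bilinear form. Then there exists a basis of S indexed by ℕ ⊕ ℕ, say consisting of vectors p_n (n ∈ ℕ) and q_n (n ∈ ℕ), such that B(p_n, q_m) = δ_{nm}, B(p_n, p_m) = 0 and B(q_n, q_m) = 0 for all n, m ∈ ℕ. -/
open Finset Submodule
open scoped Classical
namespace Stmt3Aux
variable {S : Type*} [AddCommGroup S] [Module ℝ S]

noncomputable def proj (B : S →ₗ[ℝ] S →ₗ[ℝ] ℝ) {n : ℕ} (F : Fin n → S × S) (x : S) : S :=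
  x - ∑ i, (B (F i).1 x) • (F i).2 + ∑ i, (B (F i).2 x) • (F i).1

def Wsp {n : ℕ} (F : Fin n → S × S) : Submodule ℝ S :=
  span ℝ (Set.range (fun i => (F i).1) ∪ Set.range (fun i => (F i).2))

lemma sub_proj_mem (B : S →ₗ[ℝ] S →ₗ[ℝ] ℝ) {n : ℕ} (F : Fin n → S × S) (x : S) :
    x - proj B F x ∈ Wsp F := by
  have hx : x - proj B F x
      = ∑ i, (B (F i).1 x) • (F i).2 - ∑ i, (B (F i).2 x) • (F i).1 := by
    unfold proj; abel
  rw [hx]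
  refine sub_mem (Submodule.sum_mem _ fun i _ => Submodule.smul_mem _ _ ?_)
    (Submodule.sum_mem _ fun i _ => Submodule.smul_mem _ _ ?_)
  · exact subset_span (Or.inr ⟨i, rfl⟩)
  · exact subset_span (Or.inl ⟨i, rfl⟩)

lemma exists_not_mem (b : Module.Basis ℕ ℝ S) {n : ℕ} (F : Fin n → S × S) :
    ∃ m : ℕ, b m ∉ Wsp F := by
  by_contra h
  push_neg at h
  have htop : Wsp F = ⊤ := by
    rw [eq_top_iff, ← b.span_eq]
    exact span_le.2 (Set.range_subset_iff.2 h)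
  have hfin : FiniteDimensional ℝ (Wsp F) :=
    FiniteDimensional.span_of_finite ℝ ((Set.finite_range _).union (Set.finite_range _))
  rw [htop] at hfin
  haveI : FiniteDimensional ℝ S := Module.Finite.equiv (Submodule.topEquiv)
  haveI := FiniteDimensional.fintypeBasisIndex b
  exact not_finite ℕ

variable (b : Module.Basis ℕ ℝ S) (B : S →ₗ[ℝ] S →ₗ[ℝ] ℝ)

noncomputable def mIdx {n : ℕ} (F : Fin n → S × S) : ℕ := Nat.find (exists_not_mem b F)

noncomputable def uVec {n : ℕ} (F : Fin n → S × S) : S := proj B F (b (mIdx b F))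

lemma uVec_ne {n : ℕ} (F : Fin n → S × S) : uVec b B F ≠ 0 := by
  intro h
  have hm : b (mIdx b F) ∉ Wsp F := Nat.find_spec (exists_not_mem b F)
  apply hm
  have h2 := sub_proj_mem B F (b (mIdx b F))
  rw [show proj B F (b (mIdx b F)) = uVec b B F from rfl, h, sub_zero] at h2
  exact h2

lemma exists_w (hnd : ∀ v : S, (∀ w : S, B v w = 0) → v = 0) {n : ℕ} (F : Fin n → S × S) :
    ∃ w : S, B (uVec b B F) w ≠ 0 := by
  by_contra h
  push_neg at h
  exact uVec_ne b B F (hnd _ h)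

noncomputable def wVec (hnd : ∀ v : S, (∀ w : S, B v w = 0) → v = 0) {n : ℕ}
    (F : Fin n → S × S) : S := Classical.choose (exists_w b B hnd F)

lemma wVec_spec (hnd) {n : ℕ} (F : Fin n → S × S) :
    B (uVec b B F) (wVec b B hnd F) ≠ 0 := Classical.choose_spec (exists_w b B hnd F)

noncomputable def qVec (hnd : ∀ v : S, (∀ w : S, B v w = 0) → v = 0) {n : ℕ}
    (F : Fin n → S × S) : S :=
  (B (uVec b B F) (proj B F (wVec b B hnd F)))⁻¹ • proj B F (wVec b B hnd F)

noncomputable def pq (hnd : ∀ v : S, (∀ w : S, B v w = 0) → v = 0) : ℕ → S × S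
  | n =>
      (uVec b B (fun i : Fin n => pq hnd i), qVec b B hnd (fun i : Fin n => pq hnd i))
  decreasing_by all_goals exact i.2

variable (hnd : ∀ v : S, (∀ w : S, B v w = 0) → v = 0)

noncomputable def pS (n : ℕ) : S := (pq b B hnd n).1
noncomputable def qS (n : ℕ) : S := (pq b B hnd n).2
noncomputable def Fn (n : ℕ) : Fin n → S × S := fun i => pq b B hnd i

lemma pq_def (n : ℕ) :
    pq b B hnd n = (uVec b B (Fn b B hnd n), qVec b B hnd (Fn b B hnd n)) := by
  rw [pq]; rfl

lemma pS_def (n : ℕ) : pS b B hnd n = uVec b B (Fn b B hnd n) := by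
  rw [pS, pq_def]

lemma qS_def (n : ℕ) : qS b B hnd n = qVec b B hnd (Fn b B hnd n) := by
  rw [qS, pq_def]

lemma skew (halt : ∀ v : S, B v v = 0) (v w : S) : B v w = - B w v := by
  have h := halt (v + w)
  simp only [map_add, LinearMap.add_apply, halt v, halt w] at h
  linarith

lemma B_proj (v x : S) {n : ℕ} :
    B v (proj B (Fn b B hnd n) x)
      = B v x - ∑ i : Fin n, (B (pS b B hnd i) x) * (B v (qS b B hnd i))
          + ∑ i : Fin n, (B (qS b B hnd i) x) * (B v (pS b B hnd i)) := by
  simp [proj, Fn, pS, qS, map_sub, map_add, map_sum, map_smul, smul_eq_mul]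

lemma proj_orth (halt : ∀ v : S, B v v = 0) {n : ℕ}
    (hP : ∀ i j : ℕ, i < n → j < n →
      (B (pS b B hnd i) (qS b B hnd j) = if i = j then 1 else 0) ∧
      B (pS b B hnd i) (pS b B hnd j) = 0 ∧ B (qS b B hnd i) (qS b B hnd j) = 0)
    (x : S) {j : ℕ} (hj : j < n) :
    B (pS b B hnd j) (proj B (Fn b B hnd n) x) = 0 ∧
    B (qS b B hnd j) (proj B (Fn b B hnd n) x) = 0 := by
  constructor
  · rw [B_proj]
    have h1 : ∑ i : Fin n, (B (pS b B hnd i) x) * (B (pS b B hnd j) (qS b B hnd i))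
        = B (pS b B hnd j) x := by
      rw [Finset.sum_congr rfl (fun i _ => by rw [(hP j i hj i.2).1])]
      rw [Finset.sum_eq_single (⟨j, hj⟩ : Fin n)]
      · simp
      · intro i _ hi
        rw [if_neg, mul_zero]
        exact fun h => hi (Fin.ext h.symm)
      · simp
    have h2 : ∑ i : Fin n, (B (qS b B hnd i) x) * (B (pS b B hnd j) (pS b B hnd i)) = 0 := by
      rw [Finset.sum_congr rfl (fun i _ => by rw [(hP j i hj i.2).2.1, mul_zero])]
      simp
    rw [h1, h2]; ring
  · rw [B_proj]
    have h1 : ∑ i : Fin n, (B (pS b B hnd i) x) * (B (qS b B hnd j) (qS b B hnd i)) = 0 := by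
      rw [Finset.sum_congr rfl (fun i _ => by rw [(hP j i hj i.2).2.2, mul_zero])]
      simp
    have h2 : ∑ i : Fin n, (B (qS b B hnd i) x) * (B (qS b B hnd j) (pS b B hnd i))
        = - B (qS b B hnd j) x := by
      rw [Finset.sum_congr rfl (fun i _ => by
        rw [skew B halt (qS b B hnd j) (pS b B hnd i), (hP i j i.2 hj).1])]
      rw [Finset.sum_eq_single (⟨j, hj⟩ : Fin n)]
      · simp
      · intro i _ hi
        rw [if_neg, neg_zero, mul_zero]
        exact fun h => hi (Fin.ext h)
      · simp
    rw [h1, h2]; ring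

lemma rel (halt : ∀ v : S, B v v = 0) :
    ∀ n, ∀ i j : ℕ, i < n → j < n →
      (B (pS b B hnd i) (qS b B hnd j) = if i = j then 1 else 0) ∧
      B (pS b B hnd i) (pS b B hnd j) = 0 ∧ B (qS b B hnd i) (qS b B hnd j) = 0 := by
  intro n
  induction n with
  | zero => intro i j hi _; omega
  | succ n ih =>
    -- facts about the new vectors
    have hpn : pS b B hnd n = proj B (Fn b B hnd n) (b (mIdx b (Fn b B hnd n))) :=
      pS_def b B hnd n
    have hqn : qS b B hnd n
        = (B (uVec b B (Fn b B hnd n)) (proj B (Fn b B hnd n) (wVec b B hnd (Fn b B hnd n))))⁻¹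
          • proj B (Fn b B hnd n) (wVec b B hnd (Fn b B hnd n)) := qS_def b B hnd n
    -- previous vectors kill any projected vector
    have hOrth := fun (x : S) {j : ℕ} (hj : j < n) => proj_orth b B hnd halt ih x hj
    -- p n and q n are projections (up to scalar)
    have hpnew : ∀ j < n, B (pS b B hnd j) (pS b B hnd n) = 0 ∧
        B (qS b B hnd j) (pS b B hnd n) = 0 := by
      intro j hj; rw [hpn]; exact hOrth _ hj
    have hqnew : ∀ j < n, B (pS b B hnd j) (qS b B hnd n) = 0 ∧
        B (qS b B hnd j) (qS b B hnd n) = 0 := by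
      intro j hj
      rw [hqn]
      constructor
      · rw [map_smul, smul_eq_mul, (hOrth _ hj).1, mul_zero]
      · rw [map_smul, smul_eq_mul, (hOrth _ hj).2, mul_zero]
    have hpu : uVec b B (Fn b B hnd n) = pS b B hnd n := (pS_def b B hnd n).symm
    have hBuw : ∀ x : S, B (pS b B hnd n) (proj B (Fn b B hnd n) x) = B (pS b B hnd n) x := by
      intro x
      rw [B_proj]
      have h1 : ∑ i : Fin n, (B (pS b B hnd i) x) * (B (pS b B hnd n) (qS b B hnd i)) = 0 := by
        rw [Finset.sum_congr rfl (fun i _ => by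
          rw [skew B halt (pS b B hnd n) (qS b B hnd i), (hpnew i i.2).2, neg_zero, mul_zero])]
        simp
      have h2 : ∑ i : Fin n, (B (qS b B hnd i) x) * (B (pS b B hnd n) (pS b B hnd i)) = 0 := by
        rw [Finset.sum_congr rfl (fun i _ => by
          rw [skew B halt (pS b B hnd n) (pS b B hnd i), (hpnew i i.2).1, neg_zero, mul_zero])]
        simp
      rw [h1, h2]; ring
    have hBne : B (pS b B hnd n) (proj B (Fn b B hnd n) (wVec b B hnd (Fn b B hnd n))) ≠ 0 := by
      rw [hBuw]
      have := wVec_spec b B hnd (Fn b B hnd n)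
      rwa [hpu] at this
    have hone : B (pS b B hnd n) (qS b B hnd n) = 1 := by
      rw [hqn, map_smul, smul_eq_mul, hpu]
      exact inv_mul_cancel₀ hBne
    -- now the case analysis
    intro i j hi hj
    have hi' := Nat.lt_succ_iff_lt_or_eq.1 hi
    have hj' := Nat.lt_succ_iff_lt_or_eq.1 hj
    refine ⟨?_, ?_, ?_⟩
    · rcases hi' with hi' | hi' <;> rcases hj' with hj' | hj'
      · exact (ih i j hi' hj').1
      · rw [hj', (hqnew i hi').1, if_neg (by omega)]
      · rw [hi', skew B halt, (hpnew j hj').2, neg_zero, if_neg (by omega)]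
      · rw [hi', hj', hone, if_pos rfl]
    · rcases hi' with hi' | hi' <;> rcases hj' with hj' | hj'
      · exact (ih i j hi' hj').2.1
      · rw [hj']; exact (hpnew i hi').1
      · rw [hi', skew B halt, (hpnew j hj').1, neg_zero]
      · rw [hi', hj']; exact halt _
    · rcases hi' with hi' | hi' <;> rcases hj' with hj' | hj'
      · exact (ih i j hi' hj').2.2
      · rw [hj']; exact (hqnew i hi').2
      · rw [hi', skew B halt, (hqnew j hj').2, neg_zero]
      · rw [hi', hj']; exact halt _

noncomputable def mS (n : ℕ) : ℕ := mIdx b (Fn b B hnd n)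

lemma mS_spec (n : ℕ) : b (mS b B hnd n) ∉ Wsp (Fn b B hnd n) :=
  Nat.find_spec (exists_not_mem b (Fn b B hnd n))

lemma mS_min {n k : ℕ} (h : k < mS b B hnd n) : b k ∈ Wsp (Fn b B hnd n) := by
  have := Nat.find_min (exists_not_mem b (Fn b B hnd n)) h
  rwa [not_not] at this

lemma mS_diff (n : ℕ) : b (mS b B hnd n) - pS b B hnd n ∈ Wsp (Fn b B hnd n) := by
  rw [pS_def]
  exact sub_proj_mem B (Fn b B hnd n) _

lemma W_mono (n : ℕ) : Wsp (Fn b B hnd n) ≤ Wsp (Fn b B hnd (n + 1)) := by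
  apply span_mono
  apply Set.union_subset_union
  · rintro x ⟨i, rfl⟩; exact ⟨i.castSucc, rfl⟩
  · rintro x ⟨i, rfl⟩; exact ⟨i.castSucc, rfl⟩

lemma pS_mem_W (n : ℕ) : pS b B hnd n ∈ Wsp (Fn b B hnd (n + 1)) :=
  subset_span (Or.inl ⟨⟨n, n.lt_succ_self⟩, rfl⟩)

lemma b_mS_mem (n : ℕ) : b (mS b B hnd n) ∈ Wsp (Fn b B hnd (n + 1)) := by
  have h : b (mS b B hnd n) = pS b B hnd n + (b (mS b B hnd n) - pS b B hnd n) := by abel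
  rw [h]
  exact add_mem (pS_mem_W b B hnd n) (W_mono b B hnd n (mS_diff b B hnd n))

lemma mS_strictMono : StrictMono (mS b B hnd) := by
  apply strictMono_nat_of_lt_succ
  intro n
  by_contra h
  push_neg at h
  rcases lt_or_eq_of_le h with h | h
  · exact mS_spec b B hnd (n + 1) (W_mono b B hnd n (mS_min b B hnd h))
  · exact mS_spec b B hnd (n + 1) (h ▸ b_mS_mem b B hnd n)

lemma b_mem_span (k : ℕ) :
    b k ∈ span ℝ (Set.range (Sum.elim (pS b B hnd) (qS b B hnd))) := by
  have hle : ∀ n, Wsp (Fn b B hnd n)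
      ≤ span ℝ (Set.range (Sum.elim (pS b B hnd) (qS b B hnd))) := by
    intro n
    apply span_le.2
    rintro x (⟨i, rfl⟩ | ⟨i, rfl⟩)
    · exact subset_span ⟨Sum.inl i, rfl⟩
    · exact subset_span ⟨Sum.inr i, rfl⟩
  have hk : k ≤ mS b B hnd k := (mS_strictMono b B hnd).le_apply
  rcases lt_or_eq_of_le hk with h | h
  · exact hle k (mS_min b B hnd h)
  · have h2 : b (mS b B hnd k) = pS b B hnd k + (b (mS b B hnd k) - pS b B hnd k) := by abel
    rw [h, h2]
    refine add_mem (subset_span ⟨Sum.inl k, rfl⟩) (hle k (mS_diff b B hnd k))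

lemma span_top :
    ⊤ ≤ span ℝ (Set.range (Sum.elim (pS b B hnd) (qS b B hnd))) := by
  rw [← b.span_eq]
  exact span_le.2 (Set.range_subset_iff.2 (b_mem_span b B hnd))

lemma indep (halt : ∀ v : S, B v v = 0) :
    LinearIndependent ℝ (Sum.elim (pS b B hnd) (qS b B hnd)) := by
  have relAll : ∀ i j : ℕ,
      (B (pS b B hnd i) (qS b B hnd j) = if i = j then 1 else 0) ∧
      B (pS b B hnd i) (pS b B hnd j) = 0 ∧ B (qS b B hnd i) (qS b B hnd j) = 0 :=
    fun i j => rel b B hnd halt (max i j + 1) i j (by omega) (by omega)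
  rw [linearIndependent_iff']
  intro s g hsum i hi
  cases i with
  | inl j =>
    have h := congrArg (fun z => B z (qS b B hnd j)) hsum
    simp only [map_sum, LinearMap.coe_smul, map_smul, LinearMap.sum_apply,
      LinearMap.smul_apply, smul_eq_mul, map_zero, LinearMap.zero_apply] at h
    rw [Finset.sum_eq_single (Sum.inl j : ℕ ⊕ ℕ)] at h
    · rwa [show (Sum.elim (pS b B hnd) (qS b B hnd) (Sum.inl j)) = pS b B hnd j from rfl,
        (relAll j j).1, if_pos rfl, mul_one] at h
    · rintro (k | k) _ hk
      · rw [show (Sum.elim (pS b B hnd) (qS b B hnd) (Sum.inl k)) = pS b B hnd k from rfl,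
          (relAll k j).1, if_neg (by rintro rfl; exact hk rfl), mul_zero]
      · rw [show (Sum.elim (pS b B hnd) (qS b B hnd) (Sum.inr k)) = qS b B hnd k from rfl,
          (relAll k j).2.2, mul_zero]
    · exact fun h' => absurd hi h'
  | inr j =>
    have h := congrArg (fun z => B (pS b B hnd j) z) hsum
    simp only [map_sum, map_smul, smul_eq_mul, map_zero] at h
    rw [Finset.sum_eq_single (Sum.inr j : ℕ ⊕ ℕ)] at h
    · rwa [show (Sum.elim (pS b B hnd) (qS b B hnd) (Sum.inr j)) = qS b B hnd j from rfl,
        (relAll j j).1, if_pos rfl, mul_one] at h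
    · rintro (k | k) _ hk
      · rw [show (Sum.elim (pS b B hnd) (qS b B hnd) (Sum.inl k)) = pS b B hnd k from rfl,
          (relAll j k).2.1, mul_zero]
      · rw [show (Sum.elim (pS b B hnd) (qS b B hnd) (Sum.inr k)) = qS b B hnd k from rfl,
          (relAll j k).1, if_neg (by rintro rfl; exact hk rfl), mul_zero]
    · exact fun h' => absurd hi h'

end Stmt3Aux

/-- Every countably infinite dimensional real symplectic vector space `(S, B)`
(with `B` a nondegenerate alternating bilinear form) admits a symplectic basis
`(p_n, q_n)_{n ∈ ℕ}` with `B(p_n, q_m) = δ_{nm}` and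
`B(p_n, p_m) = B(q_n, q_m) = 0`. -/
theorem stmt3 {S : Type*} [AddCommGroup S] [Module ℝ S] (b : Module.Basis ℕ ℝ S)
    (B : S →ₗ[ℝ] S →ₗ[ℝ] ℝ)
    (halt : ∀ v : S, B v v = 0)
    (hnd : ∀ v : S, (∀ w : S, B v w = 0) → v = 0) :
    ∃ e : Module.Basis (ℕ ⊕ ℕ) ℝ S,
      (∀ n m : ℕ, B (e (Sum.inl n)) (e (Sum.inr m)) = if n = m then 1 else 0) ∧
      (∀ n m : ℕ, B (e (Sum.inl n)) (e (Sum.inl m)) = 0) ∧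
      (∀ n m : ℕ, B (e (Sum.inr n)) (e (Sum.inr m)) = 0) := by
  have relAll : ∀ i j : ℕ,
      (B (Stmt3Aux.pS b B hnd i) (Stmt3Aux.qS b B hnd j) = if i = j then 1 else 0) ∧
      B (Stmt3Aux.pS b B hnd i) (Stmt3Aux.pS b B hnd j) = 0 ∧
      B (Stmt3Aux.qS b B hnd i) (Stmt3Aux.qS b B hnd j) = 0 :=
    fun i j => Stmt3Aux.rel b B hnd halt (max i j + 1) i j (by omega) (by omega)
  refine ⟨Module.Basis.mk (Stmt3Aux.indep b B hnd halt) (Stmt3Aux.span_top b B hnd), ?_, ?_, ?_⟩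
  · intro n m
    rw [Module.Basis.mk_apply, Module.Basis.mk_apply]
    exact (relAll n m).1
  · intro n m
    rw [Module.Basis.mk_apply, Module.Basis.mk_apply]
    exact (relAll n m).2.1
  · intro n m
    rw [Module.Basis.mk_apply, Module.Basis.mk_apply]
    exact (relAll n m).2.2
end

section
/- Let S be a real vector space of countably infinite dimension (i.e. admitting a basis indexed by ℕ) and let B : S × S → ℝ be a nondegenerate alternating bilinear form. Then there exists a real-linear map I : S → S with I ∘ I = −id_S such that the bilinear form (v, w) ↦ B(I v, w) is symmetric and positive definite (i.e. B(I v, v) > 0 for all v ≠ 0), and such that B(I v, I w) = B(v, w) for all v, w ∈ S. In other words, S carries a complex structure I compatible with B for which ⟨v, w⟩ := B(I v, w) + i·B(v, w) defines an inner product whose imaginary part is B. -/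
namespace Stmt4Aux

variable {S : Type*} [AddCommGroup S] [Module ℝ S]

section defs

variable (b : Module.Basis ℕ ℝ S) (B : S →ₗ[ℝ] S →ₗ[ℝ] ℝ)

def Vof {n : ℕ} (g : Fin n → S × S) : Submodule ℝ S :=
  Submodule.span ℝ (Set.range (fun i => (g i).1) ∪ Set.range (fun i => (g i).2))

def Pof {n : ℕ} (g : Fin n → S × S) (x : S) : S :=
  ∑ i, (B x (g i).2 • (g i).1 - B x (g i).1 • (g i).2)

open Classical in
noncomputable def kOf {n : ℕ} (g : Fin n → S × S) : ℕ :=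
  if h : ∃ k, b k ∉ Vof g then Nat.find h else 0

noncomputable def uOf {n : ℕ} (g : Fin n → S × S) : S :=
  b (kOf b g) - Pof B g (b (kOf b g))

open Classical in
noncomputable def wOf {n : ℕ} (g : Fin n → S × S) : S :=
  if h : ∃ w, B (uOf b B g) w ≠ 0 then Classical.choose h - Pof B g (Classical.choose h)
  else 0

noncomputable def stepOf {n : ℕ} (g : Fin n → S × S) : S × S :=
  (uOf b B g, (B (uOf b B g) (wOf b B g))⁻¹ • wOf b B g)

noncomputable def pr : ℕ → S × S
  | n => stepOf b B (fun i : Fin n => pr i)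
  decreasing_by exact i.2

lemma pr_eq (n : ℕ) : pr b B n = stepOf b B (fun i : Fin n => pr b B i) := by rw [pr]

end defs

section basic

variable (b : Module.Basis ℕ ℝ S) (B : S →ₗ[ℝ] S →ₗ[ℝ] ℝ) {n : ℕ} (g : Fin n → S × S)

lemma Pof_mem (x : S) : Pof B g x ∈ Vof g := by
  refine Submodule.sum_mem _ fun i _ => Submodule.sub_mem _ ?_ ?_
  · exact Submodule.smul_mem _ _ (Submodule.subset_span (Or.inl ⟨i, rfl⟩))
  · exact Submodule.smul_mem _ _ (Submodule.subset_span (Or.inr ⟨i, rfl⟩))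

lemma exists_bk_not_mem : ∃ k, b k ∉ Vof g := by
  by_contra h
  push_neg at h
  have htop : Vof g = ⊤ := by
    refine top_unique ?_
    rw [← b.span_eq, Submodule.span_le]
    rintro x ⟨k, rfl⟩; exact h k
  have hfg : (Vof g).FG := by
    apply Submodule.fg_def.mpr
    exact ⟨_, (Set.finite_range _).union (Set.finite_range _), rfl⟩
  rw [htop] at hfg
  have hfin : Module.Finite ℝ S := Module.finite_def.mpr hfg
  haveI := hfin
  exact absurd (Module.Finite.finite_basis b) (not_finite_iff_infinite.mpr inferInstance)

open Classical in
lemma kOf_eq : kOf b g = Nat.find (exists_bk_not_mem b g) := by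
  rw [kOf, dif_pos]

lemma bk_not_mem : b (kOf b g) ∉ Vof g := by
  classical
  rw [kOf_eq]
  exact Nat.find_spec (exists_bk_not_mem b g)

lemma bj_mem {j : ℕ} (hj : j < kOf b g) : b j ∈ Vof g := by
  classical
  rw [kOf_eq] at hj
  have := Nat.find_min (exists_bk_not_mem b g) hj
  simpa using this

lemma uOf_ne : uOf b B g ≠ 0 := by
  intro h
  apply bk_not_mem b g
  have : b (kOf b g) = Pof B g (b (kOf b g)) := by
    have := sub_eq_zero.mp h; exact this
  rw [this]; exact Pof_mem B g _

end basic

section skew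

variable {B : S →ₗ[ℝ] S →ₗ[ℝ] ℝ} (halt : ∀ v : S, B v v = 0)

include halt in
lemma skew (v w : S) : B v w = - B w v := by
  have h := halt (v + w)
  simp only [map_add, LinearMap.add_apply, halt v, halt w] at h
  linarith

end skew

section perp

variable {b : Module.Basis ℕ ℝ S} {B : S →ₗ[ℝ] S →ₗ[ℝ] ℝ} (halt : ∀ v : S, B v v = 0)
  {n : ℕ} {g : Fin n → S × S}
  (Hg1 : ∀ i j, B (g i).1 (g j).1 = 0)
  (Hg2 : ∀ i j, B (g i).2 (g j).2 = 0)
  (Hg3 : ∀ i j, B (g i).1 (g j).2 = if i = j then 1 else 0)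

include halt Hg1 Hg2 Hg3

lemma sub_P_perp (x : S) : ∀ y ∈ Vof g, B (x - Pof B g x) y = 0 := by
  intro y hy
  have : Vof g ≤ LinearMap.ker (B (x - Pof B g x)) := by
    rw [Vof, Submodule.span_le]
    rintro y (⟨j, rfl⟩ | ⟨j, rfl⟩) <;> simp only [SetLike.mem_coe, LinearMap.mem_ker] <;>
      rw [map_sub, LinearMap.sub_apply]
    · have : B (Pof B g x) (g j).1 = B x (g j).1 := by
        rw [Pof, map_sum]
        rw [LinearMap.coe_sum, Finset.sum_apply]
        have : ∀ i, (B (B x (g i).2 • (g i).1 - B x (g i).1 • (g i).2)) (g j).1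
            = (if j = i then B x (g i).1 else 0) := by
          intro i
          rw [map_sub, LinearMap.sub_apply, map_smul, map_smul, LinearMap.smul_apply,
            LinearMap.smul_apply, Hg1, skew halt (g i).2 (g j).1, Hg3]
          by_cases h : j = i <;> simp [h]
        rw [Finset.sum_congr rfl fun i _ => this i, Finset.sum_ite_eq]
        simp
      rw [this, sub_self]
    · have : B (Pof B g x) (g j).2 = B x (g j).2 := by
        rw [Pof, map_sum]
        rw [LinearMap.coe_sum, Finset.sum_apply]
        have : ∀ i, (B (B x (g i).2 • (g i).1 - B x (g i).1 • (g i).2)) (g j).2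
            = (if i = j then B x (g i).2 else 0) := by
          intro i
          rw [map_sub, LinearMap.sub_apply, map_smul, map_smul, LinearMap.smul_apply,
            LinearMap.smul_apply, Hg2, Hg3]
          by_cases h : i = j <;> simp [h]
        rw [Finset.sum_congr rfl fun i _ => this i, Finset.sum_ite_eq']
        simp
      rw [this, sub_self]
  exact this hy

lemma uOf_perp : ∀ y ∈ Vof g, B (uOf b B g) y = 0 :=
  sub_P_perp halt Hg1 Hg2 Hg3 _

lemma wOf_perp : ∀ y ∈ Vof g, B (wOf b B g) y = 0 := by
  intro y hy
  classical
  rw [wOf]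
  split
  · exact sub_P_perp halt Hg1 Hg2 Hg3 _ y hy
  · simp

lemma B_u_w (hnd : ∀ v : S, (∀ w : S, B v w = 0) → v = 0) :
    B (uOf b B g) (wOf b B g) ≠ 0 := by
  classical
  have hex : ∃ w, B (uOf b B g) w ≠ 0 := by
    by_contra h
    push_neg at h
    exact uOf_ne b B g (hnd _ h)
  rw [wOf, dif_pos hex, map_sub]
  have : B (uOf b B g) (Pof B g (Classical.choose hex)) = 0 :=
    uOf_perp halt Hg1 Hg2 Hg3 _ (Pof_mem B g _)
  rw [this, sub_zero]
  exact Classical.choose_spec hex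

lemma step_pair (hnd : ∀ v : S, (∀ w : S, B v w = 0) → v = 0) :
    B (stepOf b B g).1 (stepOf b B g).2 = 1 := by
  have h := B_u_w (b := b) halt Hg1 Hg2 Hg3 hnd
  rw [stepOf]
  simp only [map_smul, smul_eq_mul]
  field_simp

lemma step_perp1 : ∀ y ∈ Vof g, B (stepOf b B g).1 y = 0 :=
  uOf_perp halt Hg1 Hg2 Hg3

lemma step_perp2 : ∀ y ∈ Vof g, B (stepOf b B g).2 y = 0 := by
  intro y hy
  rw [stepOf]
  simp only [map_smul, LinearMap.smul_apply, smul_eq_mul]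
  rw [wOf_perp halt Hg1 Hg2 Hg3 y hy, mul_zero]

end perp

section main

variable (b : Module.Basis ℕ ℝ S) (B : S →ₗ[ℝ] S →ₗ[ℝ] ℝ)

noncomputable def Ev (n : ℕ) : S := (pr b B n).1
noncomputable def Fv (n : ℕ) : S := (pr b B n).2
noncomputable def gfun (n : ℕ) : Fin n → S × S := fun i => pr b B i

lemma E_mem {i n : ℕ} (h : i < n) : Ev b B i ∈ Vof (gfun b B n) :=
  Submodule.subset_span (Or.inl ⟨⟨i, h⟩, rfl⟩)

lemma F_mem {i n : ℕ} (h : i < n) : Fv b B i ∈ Vof (gfun b B n) :=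
  Submodule.subset_span (Or.inr ⟨⟨i, h⟩, rfl⟩)

lemma Ev_step (n : ℕ) : Ev b B n = (stepOf b B (gfun b B n)).1 := by
  rw [Ev, pr_eq]; rfl

lemma Fv_step (n : ℕ) : Fv b B n = (stepOf b B (gfun b B n)).2 := by
  rw [Fv, pr_eq]; rfl

variable (halt : ∀ v : S, B v v = 0) (hnd : ∀ v : S, (∀ w : S, B v w = 0) → v = 0)

include halt hnd in
lemma rels : ∀ n : ℕ, ∀ i < n, ∀ j < n,
    B (Ev b B i) (Ev b B j) = 0 ∧ B (Fv b B i) (Fv b B j) = 0 ∧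
      B (Ev b B i) (Fv b B j) = if i = j then 1 else 0 := by
  intro n
  induction n with
  | zero => omega
  | succ n IH =>
    have Hg1 : ∀ i j : Fin n, B (gfun b B n i).1 (gfun b B n j).1 = 0 :=
      fun i j => (IH i i.2 j j.2).1
    have Hg2 : ∀ i j : Fin n, B (gfun b B n i).2 (gfun b B n j).2 = 0 :=
      fun i j => (IH i i.2 j j.2).2.1
    have Hg3 : ∀ i j : Fin n, B (gfun b B n i).1 (gfun b B n j).2 = if i = j then 1 else 0 := by
      intro i j
      rw [show (if i = j then (1:ℝ) else 0) = if (i:ℕ) = (j:ℕ) then 1 else 0 by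
        simp [Fin.ext_iff]]
      exact (IH i i.2 j j.2).2.2
    have hp1 : ∀ y ∈ Vof (gfun b B n), B (Ev b B n) y = 0 := by
      rw [Ev_step]; exact step_perp1 halt Hg1 Hg2 Hg3
    have hp2 : ∀ y ∈ Vof (gfun b B n), B (Fv b B n) y = 0 := by
      rw [Fv_step]; exact step_perp2 halt Hg1 Hg2 Hg3
    have hp3 : B (Ev b B n) (Fv b B n) = 1 := by
      rw [Ev_step, Fv_step]; exact step_pair (b := b) halt Hg1 Hg2 Hg3 hnd
    intro i hi j hj
    rcases Nat.lt_succ_iff_lt_or_eq.mp hi with hi' | rfl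
    · rcases Nat.lt_succ_iff_lt_or_eq.mp hj with hj' | rfl
      · exact IH i hi' j hj'
      · refine ⟨?_, ?_, ?_⟩
        · rw [skew halt, hp1 _ (E_mem b B hi'), neg_zero]
        · rw [skew halt, hp2 _ (F_mem b B hi'), neg_zero]
        · rw [skew halt, hp2 _ (E_mem b B hi'), neg_zero, if_neg (Nat.ne_of_lt hi')]
    · rcases Nat.lt_succ_iff_lt_or_eq.mp hj with hj' | rfl
      · refine ⟨hp1 _ (E_mem b B hj'), hp2 _ (F_mem b B hj'), ?_⟩
        rw [hp1 _ (F_mem b B hj'), if_neg (Nat.ne_of_gt hj')]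
      · exact ⟨halt _, halt _, by rw [hp3, if_pos rfl]⟩

include halt hnd in
lemma rel_EE (i j : ℕ) : B (Ev b B i) (Ev b B j) = 0 :=
  (rels b B halt hnd (max i j + 1) i (by omega) j (by omega)).1

include halt hnd in
lemma rel_FF (i j : ℕ) : B (Fv b B i) (Fv b B j) = 0 :=
  (rels b B halt hnd (max i j + 1) i (by omega) j (by omega)).2.1

include halt hnd in
lemma rel_EF (i j : ℕ) : B (Ev b B i) (Fv b B j) = if i = j then 1 else 0 :=
  (rels b B halt hnd (max i j + 1) i (by omega) j (by omega)).2.2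

lemma Vle {m n : ℕ} (h : m ≤ n) : Vof (gfun b B m) ≤ Vof (gfun b B n) := by
  apply Submodule.span_mono
  apply Set.union_subset_union <;>
    · rintro x ⟨i, rfl⟩; exact ⟨⟨i, lt_of_lt_of_le i.2 h⟩, rfl⟩

lemma bk_mem_succ (n : ℕ) : b (kOf b (gfun b B n)) ∈ Vof (gfun b B (n + 1)) := by
  have h : b (kOf b (gfun b B n)) = uOf b B (gfun b B n) + Pof B (gfun b B n) (b (kOf b (gfun b B n))) := by
    rw [uOf, sub_add_cancel]
  rw [h]
  refine Submodule.add_mem _ ?_ (Vle b B (Nat.le_succ n) (Pof_mem B _ _))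
  have : uOf b B (gfun b B n) = Ev b B n := by rw [Ev_step]; rfl
  rw [this]
  exact E_mem b B (Nat.lt_succ_self n)

lemma k_strict (n : ℕ) : kOf b (gfun b B n) < kOf b (gfun b B (n + 1)) := by
  by_contra h
  push_neg at h
  apply bk_not_mem b (gfun b B (n + 1))
  rcases lt_or_eq_of_le h with h' | h'
  · exact Vle b B (Nat.le_succ n) (bj_mem b _ h')
  · rw [h']; exact bk_mem_succ b B n

lemma n_le_k (n : ℕ) : n ≤ kOf b (gfun b B n) := by
  induction n with
  | zero => omega
  | succ n IH => have := k_strict b B n; omega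

lemma b_mem_V (m : ℕ) : b m ∈ Vof (gfun b B (m + 1)) := by
  apply bj_mem
  have := n_le_k b B (m + 1)
  omega

lemma span_top : ⊤ ≤ Submodule.span ℝ (Set.range (Sum.elim (Ev b B) (Fv b B))) := by
  rw [← b.span_eq]
  rw [Submodule.span_le]
  rintro x ⟨m, rfl⟩
  have h1 : Vof (gfun b B (m + 1)) ≤ Submodule.span ℝ (Set.range (Sum.elim (Ev b B) (Fv b B))) := by
    rw [Vof, Submodule.span_le]
    rintro y (⟨i, rfl⟩ | ⟨i, rfl⟩)
    · exact Submodule.subset_span ⟨Sum.inl i, rfl⟩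
    · exact Submodule.subset_span ⟨Sum.inr i, rfl⟩
  exact h1 (b_mem_V b B m)

include halt hnd in
lemma indep : LinearIndependent ℝ (Sum.elim (Ev b B) (Fv b B)) := by
  classical
  rw [linearIndependent_iff]
  intro l hl
  ext t0
  have hFE : ∀ i j : ℕ, B (Fv b B i) (Ev b B j) = -(if j = i then 1 else 0) := by
    intro i j; rw [skew halt, rel_EF b B halt hnd]
  obtain ⟨ψ, r, hr, hψ⟩ : ∃ (ψ : S →ₗ[ℝ] ℝ) (r : ℝ), r ≠ 0 ∧
      ∀ t, ψ (Sum.elim (Ev b B) (Fv b B) t) = if t = t0 then r else 0 := by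
    rcases t0 with a | a
    · refine ⟨B.flip (Fv b B a), 1, one_ne_zero, ?_⟩
      rintro (i | i) <;>
        simp [LinearMap.flip_apply, rel_EF b B halt hnd, rel_FF b B halt hnd, eq_comm]
    · refine ⟨B.flip (Ev b B a), -1, by norm_num, ?_⟩
      rintro (i | i) <;>
        simp [LinearMap.flip_apply, rel_EE b B halt hnd, hFE, eq_comm] <;>
        (split <;> norm_num)
  have h0 : ψ (Finsupp.linearCombination ℝ (Sum.elim (Ev b B) (Fv b B)) l) = 0 := by
    rw [hl, map_zero]
  rw [Finsupp.apply_linearCombination, Finsupp.linearCombination_apply, Finsupp.sum] at h0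
  simp only [Function.comp_apply, hψ, smul_eq_mul, mul_ite, mul_zero] at h0
  rw [Finset.sum_ite_eq' l.support t0 (fun t => l t * r)] at h0
  by_cases ht : t0 ∈ l.support
  · rw [if_pos ht] at h0
    simpa [hr] using h0
  · simpa using Finsupp.notMem_support_iff.mp ht

end main

end Stmt4Aux

open Stmt4Aux in
/-- Every countably infinite dimensional real symplectic vector space `(S, B)` carries a
compatible complex structure: a real-linear map `I : S → S` with `I ∘ I = -id` such that
`(v, w) ↦ B(I v, w)` is symmetric and positive definite and `B(I v, I w) = B(v, w)`. -/
theorem stmt4 {S : Type*} [AddCommGroup S] [Module ℝ S] (b : Module.Basis ℕ ℝ S)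
    (B : S →ₗ[ℝ] S →ₗ[ℝ] ℝ)
    (halt : ∀ v : S, B v v = 0)
    (hnd : ∀ v : S, (∀ w : S, B v w = 0) → v = 0) :
    ∃ I : S →ₗ[ℝ] S,
      (∀ v : S, I (I v) = -v) ∧
      (∀ v w : S, B (I v) w = B (I w) v) ∧
      (∀ v : S, v ≠ 0 → 0 < B (I v) v) ∧
      (∀ v w : S, B (I v) (I w) = B v w) := by
  classical
  set β : Module.Basis (ℕ ⊕ ℕ) ℝ S := Module.Basis.mk (indep b B halt hnd) (span_top b B) with hβdef
  set I : S →ₗ[ℝ] S := β.constr ℝ (Sum.elim (fun a => -(Fv b B a)) (Ev b B)) with hIdef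
  have hβ : ∀ t, β t = Sum.elim (Ev b B) (Fv b B) t := fun t => Module.Basis.mk_apply _ _ t
  have hI : ∀ t, I (β t) = Sum.elim (fun a => -(Fv b B a)) (Ev b B) t := fun t =>
    Module.Basis.constr_basis _ _ _ t
  have hIE : ∀ a, I (Ev b B a) = -(Fv b B a) := fun a => by
    have := hI (Sum.inl a); rwa [hβ] at this
  have hIF : ∀ a, I (Fv b B a) = Ev b B a := fun a => by
    have := hI (Sum.inr a); rwa [hβ] at this
  have hEE := rel_EE b B halt hnd
  have hFF := rel_FF b B halt hnd
  have hEF := rel_EF b B halt hnd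
  have hFE : ∀ i j : ℕ, B (Fv b B i) (Ev b B j) = -(if j = i then 1 else 0) := by
    intro i j; rw [skew halt, hEF]
  have hC : ∀ t s, B (I (β t)) (β s) = if t = s then 1 else 0 := by
    rintro (i | i) (j | j) <;>
      simp [hβ, hIE, hIF, hEE, hFF, hEF, hFE, eq_comm]
  refine ⟨I, ?_, ?_, ?_, ?_⟩
  · intro v
    have h : I ∘ₗ I = -LinearMap.id := by
      apply β.ext
      rintro (a | a) <;>
        simp [hβ, hIE, hIF, map_neg]
    have := LinearMap.congr_fun h v
    simpa using this
  · intro v w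
    have h : B ∘ₗ I = (B ∘ₗ I).flip := by
      apply LinearMap.ext_basis β β
      intro t s
      rw [LinearMap.flip_apply]
      simp only [LinearMap.comp_apply, hC]
      simp [eq_comm]
    have := LinearMap.congr_fun (LinearMap.congr_fun h v) w
    simpa [LinearMap.flip_apply] using this
  · intro v hv
    have key := LinearMap.sum_repr_mul_repr_mul β β (B := B ∘ₗ I) v v
    simp only [LinearMap.comp_apply, hC, smul_eq_mul, mul_ite, mul_one, mul_zero] at key
    rw [← key]
    unfold Finsupp.sum
    have hrw : ∀ i ∈ (β.repr v).support,
        (∑ j ∈ (β.repr v).support, if i = j then β.repr v i * β.repr v j else 0)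
          = (β.repr v i)^2 := by
      intro i hi
      rw [Finset.sum_ite_eq (β.repr v).support i (fun j => β.repr v i * β.repr v j),
        if_pos hi, sq]
    rw [Finset.sum_congr rfl hrw]
    have hne : β.repr v ≠ 0 := by
      intro h
      exact hv (by simpa [h] using (β.linearCombination_repr v).symm)
    apply Finset.sum_pos
    · intro i hi
      exact pow_two_pos_of_ne_zero (Finsupp.mem_support_iff.mp hi)
    · exact Finsupp.support_nonempty_iff.mpr hne
  · intro v w
    have h : (B ∘ₗ I).compl₂ I = B := by
      apply LinearMap.ext_basis β β
      intro t s
      simp only [LinearMap.compl₂_apply, LinearMap.comp_apply]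
      rcases t with i | i <;> rcases s with j | j <;>
        simp [hβ, hIE, hIF, hEE, hFF, hEF, hFE, eq_comm]
    have := LinearMap.congr_fun (LinearMap.congr_fun h v) w
    simpa using this
end

section
/- Let A be a C*-algebra, let ι : A → M(A) denote the canonical embedding of A into its multiplier algebra (sending x to the double centralizer given by left and right multiplication by x), and let J be a two-sided ideal of M(A). Then every element of J lies in the strict closure of J ∩ ι(A): for every m = (L, R) ∈ J, every ε > 0 and every finite set F ⊆ A there exists x ∈ A with ι(x) ∈ J such that ‖L(a) − x·a‖ < ε and ‖R(a) − a·x‖ < ε for all a ∈ F. -/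
open scoped MultiplierAlgebra

/-
Take an approximate unit `(u)` of `A` and put `x := m·u ∈ A`. Its image `m·ι(u)` lies in `J`
because `J` is an ideal, and `x·a = m·(u·a) → m·a`, `a·x = (a·m)·u → a·m` along the
approximate unit, so finitely many conditions hold simultaneously for some `u`.
-/

open Filter Topology

theorem CStarAlgebra.exists_isApproximateUnit (A : Type*) [NonUnitalCStarAlgebra A] :
    ∃ l : Filter A, l.IsApproximateUnit :=
  letI := CStarAlgebra.spectralOrder A
  haveI := CStarAlgebra.spectralOrderedRing A
  ⟨_, (CStarAlgebra.increasingApproximateUnit A).toIsApproximateUnit⟩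

namespace DoubleCentralizer

variable {𝕜 A : Type*} [NontriviallyNormedField 𝕜] [NonUnitalNormedRing A] [NormedSpace 𝕜 A]
  [SMulCommClass 𝕜 A A] [IsScalarTower 𝕜 A A]

theorem tendsto_mul_fst_apply {l : Filter A} (hl : l.IsApproximateUnit) (m : 𝓜(𝕜, A)) (a : A) :
    Tendsto (fun u ↦ a * m.fst u) l (𝓝 (m.snd a)) := by
  simp_rw [← m.central]
  exact hl.tendsto_mul_left (m.snd a)

variable [StarRing A] [CStarRing A]

theorem fst_mul (m : 𝓜(𝕜, A)) (u a : A) : m.fst (u * a) = m.fst u * a := by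
  set d := m.fst (u * a) - m.fst u * a
  -- `d` is annihilated from the left by all of `A`, in particular by `star d`.
  have hd : ∀ c : A, c * d = 0 := fun c ↦ by
    rw [mul_sub, sub_eq_zero, ← m.central, ← mul_assoc, m.central, mul_assoc]
  rw [← sub_eq_zero, ← CStarRing.star_mul_self_eq_zero_iff]
  exact hd (star d)

theorem coe_fst_apply (m : 𝓜(𝕜, A)) (u : A) :
    ((m.fst u : A) : 𝓜(𝕜, A)) = m * (u : 𝓜(𝕜, A)) := by
  refine DoubleCentralizer.ext 𝕜 A _ _ (Prod.ext ?_ ?_) <;> ext a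
  · simp [fst_mul]
  · simp [m.central]

theorem tendsto_fst_apply_mul {l : Filter A} (hl : l.IsApproximateUnit) (m : 𝓜(𝕜, A)) (a : A) :
    Tendsto (fun u ↦ m.fst u * a) l (𝓝 (m.fst a)) := by
  simp_rw [← fst_mul]
  exact (m.fst.continuous.tendsto a).comp (hl.tendsto_mul_right a)

end DoubleCentralizer

/-- For a C*-algebra `A`, every element of a two-sided ideal `J` of the multiplier algebra
`M(A)` lies in the strict closure of `J ∩ A`: given `m ∈ J`, `ε > 0` and a finite set
`F ⊆ A`, there is `x ∈ A` whose canonical image lies in `J` with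
`‖m·a − x·a‖ < ε` and `‖a·m − a·x‖ < ε` for all `a ∈ F`. -/
theorem stmt7 {A : Type*} [NonUnitalCStarAlgebra A]
    (J : TwoSidedIdeal 𝓜(ℂ, A)) :
    ∀ m ∈ J, ∀ ε : ℝ, 0 < ε → ∀ F : Finset A,
      ∃ x : A, (x : 𝓜(ℂ, A)) ∈ J ∧
        ∀ a ∈ F, ‖m.fst a - x * a‖ < ε ∧ ‖m.snd a - a * x‖ < ε := by
  intro m hm ε hε F
  obtain ⟨l, hl⟩ := CStarAlgebra.exists_isApproximateUnit A
  have := hl.neBot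
  have hclose : ∀ᶠ u in l, ∀ a ∈ F, ‖m.fst a - m.fst u * a‖ < ε ∧ ‖m.snd a - a * m.fst u‖ < ε :=
    eventually_all_finset F |>.mpr fun a _ ↦
      (Metric.tendsto_nhds.mp (m.tendsto_fst_apply_mul hl a) ε hε).and
        (Metric.tendsto_nhds.mp (m.tendsto_mul_fst_apply hl a) ε hε) |>.mono
        fun _ h ↦ by simpa only [dist_eq_norm'] using h
  obtain ⟨u, hu⟩ := hclose.exists
  exact ⟨m.fst u, m.coe_fst_apply u ▸ J.mul_mem_right _ _ hm, hu⟩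
end
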